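/- (Generalized Watts theorem, faithfulness) Let A be a cocomplete k-linear category. If φ : 𝓕 → 𝓖 is a nonzero morphism in A_R, then the induced natural transformation − ⊗_R φ : (− ⊗_R 𝓕) → (− ⊗_R 𝓖) is nonzero; in particular the functor Ψ : A_R → B_k(Mod R, A), 𝓕 ↦ − ⊗_R 𝓕, is faithful. -/

import Mathlib

/-!
`- ⊗_R φ` is the conjugate (mate) of precomposition `φ ≫ - : Hom_A(𝓖, -) ⟶ Hom_A(𝓕, -)`.
Conjugation is a bijection of natural transformations, and it sends `0` to `0` since the right
adjoints `Hom_A(𝓕, -)` are additive; so `- ⊗_R φ = 0` forces `φ ≫ - = 0`, whose component at `𝓖`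
sends `𝟙 𝓖` to `φ`.
-/

open CategoryTheory CategoryTheory.Limits MulOpposite

universe u

section Preamble

variable (k : Type*) [CommRing k] (R : Type u) [Ring R] [Algebra k R]
variable (A : Type*) [Category.{u} A] [Preadditive A] [CategoryTheory.Linear k A]

/-- A left `R`-module in the `k`-linear category `A`: an object together with a
ring homomorphism `ρ : R → End 𝓕` which is `k`-linear, i.e. a `k`-algebra homomorphism. -/
structure LMod where
  X : A
  ρ : R →+* End X
  algebraMap_smul' : ∀ a : k, ρ (algebraMap k R a) = a • (𝟙 X)

variable {k R A}

/-- the `k`-module structure on right `R`-modules obtained by restriction of scalars -/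
noncomputable instance (M : ModuleCat.{u} Rᵐᵒᵖ) : Module k M :=
  RestrictScalars.module k Rᵐᵒᵖ M

instance (M : ModuleCat.{u} Rᵐᵒᵖ) : IsScalarTower k Rᵐᵒᵖ M :=
  RestrictScalars.isScalarTower k Rᵐᵒᵖ M

/-- The `k`-linear structure on the category of right `R`-modules, `a • m = m · γ(a)`. -/
noncomputable instance : CategoryTheory.Linear k (ModuleCat.{u} Rᵐᵒᵖ) where
  homModule _ _ := ModuleCat.Hom.instModule
  smul_comp := by
    intros
    ext
    simp only [ModuleCat.hom_comp, ModuleCat.hom_smul, LinearMap.comp_apply]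
    rw [LinearMap.smul_apply, LinearMap.smul_apply, LinearMap.map_smul_of_tower]
    rfl

/-- `Hom_A(𝓕, N)` is a right `R`-module via `α · r := ρ(r) ≫ α`. -/
instance homRMod (F : LMod k R A) (N : A) : Module Rᵐᵒᵖ (F.X ⟶ N) where
  smul r α := F.ρ r.unop ≫ α
  one_smul α := by show F.ρ _ ≫ α = α; simp
  mul_smul r s α := by
    show F.ρ _ ≫ α = F.ρ _ ≫ F.ρ _ ≫ α
    rw [unop_mul, map_mul, End.mul_def, Category.assoc]
  smul_zero r := by show _ ≫ (0 : F.X ⟶ N) = 0; simp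
  smul_add r α β := by show _ ≫ (α + β) = _ ≫ α + _ ≫ β; simp
  add_smul r s α := by
    show F.ρ _ ≫ α = F.ρ _ ≫ α + F.ρ _ ≫ α
    rw [MulOpposite.unop_add, map_add]; exact Preadditive.add_comp _ _ _ _ _ _
  zero_smul α := by show F.ρ _ ≫ α = 0; rw [MulOpposite.unop_zero, map_zero]; exact Limits.zero_comp

lemma homRMod_smul_def (F : LMod k R A) {N : A} (r : Rᵐᵒᵖ) (α : F.X ⟶ N) :
    r • α = F.ρ r.unop ≫ α := rfl

/-- The functor `Hom_A(𝓕, -) : A ⥤ Mod R`. -/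
noncomputable def homFunctor (F : LMod k R A) : A ⥤ ModuleCat.{u} Rᵐᵒᵖ where
  obj N := ModuleCat.of Rᵐᵒᵖ (F.X ⟶ N)
  map {N N'} f := ModuleCat.ofHom
    { toFun := fun α => α ≫ f
      map_add' := fun α β => Preadditive.add_comp _ _ _ _ _ _
      map_smul' := fun r α => by
        show (F.ρ r.unop ≫ α) ≫ f = F.ρ r.unop ≫ (α ≫ f)
        rw [Category.assoc] }
  map_id N := by apply ModuleCat.hom_ext; apply LinearMap.ext; intro α; exact Category.comp_id α
  map_comp f g := by apply ModuleCat.hom_ext; apply LinearMap.ext; intro α; exact (Category.assoc _ _ _).symm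

/-- `R` as a right module over itself. -/
noncomputable abbrev RR : ModuleCat.{u} Rᵐᵒᵖ := ModuleCat.of Rᵐᵒᵖ Rᵐᵒᵖ

variable (R) in
/-- left multiplication `μ_x` by `x` on `R`, a right `R`-module map -/
def mulMap (x : R) : (RR : ModuleCat.{u} Rᵐᵒᵖ) ⟶ RR := ModuleCat.ofHom {
  toFun r := op (x * r.unop)
  map_add' r s := by
    apply unop_injective
    show x * (r + s).unop = _
    rw [show (r + s).unop = r.unop + s.unop from rfl, mul_add]; rfl
  map_smul' s t := by
    apply unop_injective
    show x * (s • t).unop = ((s • op (x * t.unop)).unop)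
    rw [show (s • t).unop = t.unop * s.unop from rfl,
      show (s • op (x * t.unop)).unop = (x * t.unop) * s.unop from rfl, mul_assoc] }

/-- Morphisms `𝓕 → 𝓖` of left `R`-modules in `A` induce natural transformations
`Hom_A(𝓖,-) ⟶ Hom_A(𝓕,-)`. -/
noncomputable def homPre {F G : LMod k R A} (φ : F.X ⟶ G.X)
    (h : ∀ r : R, F.ρ r ≫ φ = φ ≫ G.ρ r) : homFunctor G ⟶ homFunctor F where
  app N := ModuleCat.ofHom
    { toFun := fun α => φ ≫ α
      map_add' := fun α β => Preadditive.comp_add _ _ _ _ _ _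
      map_smul' := fun r α => by
        show φ ≫ G.ρ r.unop ≫ α = F.ρ r.unop ≫ φ ≫ α
        rw [← Category.assoc, ← h, Category.assoc] }
  naturality N N' f := by apply ModuleCat.hom_ext; apply LinearMap.ext; intro α; exact (Category.assoc _ _ _).symm

/-- `M ⊗ φ` : the natural transformation `- ⊗_R 𝓕 ⟶ - ⊗_R 𝓖` induced by `φ : 𝓕 ⟶ 𝓖`,
obtained as the conjugate (mate) of `homPre φ`. -/
noncomputable def tensorMap {F G : LMod k R A} {TF TG : ModuleCat.{u} Rᵐᵒᵖ ⥤ A}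
    (adjF : TF ⊣ homFunctor F) (adjG : TG ⊣ homFunctor G) (φ : F.X ⟶ G.X)
    (h : ∀ r : R, F.ρ r ≫ φ = φ ≫ G.ρ r) : TF ⟶ TG :=
  (conjugateEquiv adjG adjF).symm (homPre φ h)

/-- The canonical map `ξ_𝓕 : 𝓕 ⟶ R ⊗_R 𝓕`. -/
noncomputable def xi {F : LMod k R A} {TF : ModuleCat.{u} Rᵐᵒᵖ ⥤ A}
    (adjF : TF ⊣ homFunctor F) : F.X ⟶ TF.obj RR :=
  (adjF.unit.app RR) (1 : Rᵐᵒᵖ)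

end Preamble

theorem CategoryTheory.conjugateEquiv_zero {C D : Type*} [Category C] [Category D]
    [HasZeroMorphisms C] [HasZeroMorphisms D] {L₁ L₂ : C ⥤ D} {R₁ R₂ : D ⥤ C}
    (adj₁ : L₁ ⊣ R₁) (adj₂ : L₂ ⊣ R₂) [R₂.PreservesZeroMorphisms] :
    conjugateEquiv adj₁ adj₂ 0 = 0 := by
  ext d
  simp

theorem CategoryTheory.conjugateEquiv_symm_eq_zero_iff {C D : Type*} [Category C] [Category D]
    [HasZeroMorphisms C] [HasZeroMorphisms D] {L₁ L₂ : C ⥤ D} {R₁ R₂ : D ⥤ C}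
    (adj₁ : L₁ ⊣ R₁) (adj₂ : L₂ ⊣ R₂) [R₂.PreservesZeroMorphisms] {β : R₁ ⟶ R₂} :
    (conjugateEquiv adj₁ adj₂).symm β = 0 ↔ β = 0 := by
  rw [Equiv.symm_apply_eq, conjugateEquiv_zero, eq_comm]

section

variable {k : Type*} [CommRing k] {R : Type u} [Ring R] [Algebra k R]
  {A : Type*} [Category.{u} A] [Preadditive A] [CategoryTheory.Linear k A]

instance (F : LMod k R A) : (homFunctor F).Additive where
  map_add {_ _ f g} := by
    ext α
    exact Preadditive.comp_add _ _ _ _ f g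

theorem homPre_eq_zero_iff {F G : LMod k R A} (φ : F.X ⟶ G.X)
    (h : ∀ r : R, F.ρ r ≫ φ = φ ≫ G.ρ r) : homPre φ h = 0 ↔ φ = 0 := by
  constructor
  · intro hzero
    exact (Category.comp_id φ).symm.trans (congrArg (fun t => (t.app G.X).hom (𝟙 G.X)) hzero)
  · rintro rfl
    ext N α
    exact zero_comp

end

theorem generalized_watts_faithful_general
    (k : Type*) [CommRing k] (R : Type u) [Ring R] [Algebra k R]
    (A : Type*) [Category.{u} A] [Preadditive A]
    [CategoryTheory.Linear k A]
    {F G : LMod k R A} {TF TG : ModuleCat.{u} Rᵐᵒᵖ ⥤ A}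
    (adjF : TF ⊣ homFunctor F) (adjG : TG ⊣ homFunctor G)
    (φ : F.X ⟶ G.X) (h : ∀ r : R, F.ρ r ≫ φ = φ ≫ G.ρ r)
    (hφ : φ ≠ 0) :
    tensorMap adjF adjG φ h ≠ 0 := by
  rwa [Ne, tensorMap, conjugateEquiv_symm_eq_zero_iff, homPre_eq_zero_iff]

/-- **Generalized Watts theorem (faithfulness).** If `φ : 𝓕 ⟶ 𝓖` is a nonzero
morphism of left `R`-modules in a cocomplete `k`-linear category `A`, then the
induced natural transformation `- ⊗_R φ : (- ⊗_R 𝓕) ⟶ (- ⊗_R 𝓖)` is nonzero;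
hence the functor `Ψ : 𝓕 ↦ - ⊗_R 𝓕` is faithful. -/
theorem generalized_watts_faithful
    (k : Type*) [CommRing k] (R : Type u) [Ring R] [Algebra k R]
    (A : Type*) [Category.{u} A] [Preadditive A] [HasColimits A]
    [CategoryTheory.Linear k A]
    {F G : LMod k R A} {TF TG : ModuleCat.{u} Rᵐᵒᵖ ⥤ A}
    (adjF : TF ⊣ homFunctor F) (adjG : TG ⊣ homFunctor G)
    (φ : F.X ⟶ G.X) (h : ∀ r : R, F.ρ r ≫ φ = φ ≫ G.ρ r)
    (hφ : φ ≠ 0) :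
    tensorMap adjF adjG φ h ≠ 0 :=
  generalized_watts_faithful_general k R A adjF adjG φ h hφ
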